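/- For every A ∈ SL₂±(ℝ), the stable length of the associated isometry of ℍ² equals 2·log ρ(A), where ρ(A) is the spectral radius of A. -/

import Mathlib

open Complex Matrix UpperHalfPlane

lemma im_moebius_aux (a b c d : ℝ) (z : ℂ) (hz : z.im ≠ 0) (hdet : a * d - b * c ≠ 0) :
    (((a : ℂ) * z + b) / ((c : ℂ) * z + d)).im
      = (a * d - b * c) * z.im / Complex.normSq ((c : ℂ) * z + d) := by
  have hden : ((c : ℂ) * z + d) ≠ 0 := by
    intro h
    have him : c * z.im = 0 := by
      have := congrArg Complex.im h
      simpa using this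
    have hc : c = 0 := by
      rcases mul_eq_zero.1 him with h' | h'
      · exact h'
      · exact absurd h' hz
    have hre : c * z.re + d = 0 := by
      have := congrArg Complex.re h
      simpa using this
    have hd : d = 0 := by simpa [hc] using hre
    exact hdet (by simp [hc, hd])
  rw [Complex.div_im]
  have hnsq : Complex.normSq ((c : ℂ) * z + d) ≠ 0 := by
    simpa [Complex.normSq_eq_zero] using hden
  simp only [Complex.add_re, Complex.add_im, Complex.mul_re, Complex.mul_im, Complex.ofReal_re,
    Complex.ofReal_im]
  ring

lemma im_moebius_pos (a b c d : ℝ) (z : ℂ) (hz : z.im ≠ 0)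
    (hdet : 0 < (a * d - b * c) * z.im) :
    0 < (((a : ℂ) * z + b) / ((c : ℂ) * z + d)).im := by
  have hdet' : a * d - b * c ≠ 0 := by
    intro h; rw [h] at hdet; simp at hdet
  rw [im_moebius_aux a b c d z hz hdet']
  have hden : ((c : ℂ) * z + d) ≠ 0 := by
    intro h
    have him : c * z.im = 0 := by
      have := congrArg Complex.im h
      simpa using this
    have hc : c = 0 := by
      rcases mul_eq_zero.1 him with h' | h'
      · exact h'
      · exact absurd h' hz
    have hre : c * z.re + d = 0 := by
      have := congrArg Complex.re h
      simpa using this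
    have hd : d = 0 := by simpa [hc] using hre
    exact hdet' (by simp [hc, hd])
  have : 0 < Complex.normSq ((c : ℂ) * z + d) := Complex.normSq_pos.2 hden
  positivity

/-- The (anti-)Möbius action of a matrix with determinant `±1` on `ℂ`:
`z ↦ (az+b)/(cz+d)` if `det = 1`, and `z ↦ (az̄+b)/(cz̄+d)` otherwise. -/
noncomputable def moebiusMap (A : Matrix (Fin 2) (Fin 2) ℝ) (z : ℂ) : ℂ :=
  if A.det = 1 then
    ((A 0 0 : ℂ) * z + A 0 1) / ((A 1 0 : ℂ) * z + A 1 1)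
  else
    ((A 0 0 : ℂ) * (starRingEnd ℂ z) + A 0 1) / ((A 1 0 : ℂ) * (starRingEnd ℂ z) + A 1 1)

lemma moebiusMap_im_pos (A : Matrix (Fin 2) (Fin 2) ℝ)
    (hA : A.det = 1 ∨ A.det = -1) (z : ℍ) : 0 < (moebiusMap A (z : ℂ)).im := by
  have hdet2 : A.det = A 0 0 * A 1 1 - A 0 1 * A 1 0 := Matrix.det_fin_two A
  by_cases hd : A.det = 1
  · rw [moebiusMap, if_pos hd]
    apply im_moebius_pos _ _ _ _ _ (ne_of_gt z.2)
    rw [← hdet2, hd]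
    simpa using z.2
  · rw [moebiusMap, if_neg hd]
    have hdm : A.det = -1 := hA.resolve_left hd
    have hzc : ((starRingEnd ℂ) (z : ℂ)).im = -(z : ℂ).im := by simp
    apply im_moebius_pos
    · rw [hzc]; simpa using ne_of_gt z.2
    · rw [hzc, ← hdet2, hdm]; simpa using z.2

/-- The isometry of the hyperbolic plane `ℍ` induced by a matrix of
determinant `±1` (for other matrices we take the identity as junk value). -/
noncomputable def moebius (A : Matrix (Fin 2) (Fin 2) ℝ) (z : ℍ) : ℍ :=
  if h : A.det = 1 ∨ A.det = -1 then ⟨moebiusMap A (z : ℂ), moebiusMap_im_pos A h z⟩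
  else z

/-- The Euclidean operator norm of a `2 × 2` real matrix. -/
noncomputable def l2OpNorm (A : Matrix (Fin 2) (Fin 2) ℝ) : ℝ :=
  ‖Matrix.toEuclideanCLM (𝕜 := ℝ) A‖

/-- The spectral radius of a real matrix (computed over `ℂ`, so that complex
eigenvalues are taken into account). -/
noncomputable def specRad (A : Matrix (Fin 2) (Fin 2) ℝ) : ℝ :=
  (spectralRadius ℂ (A.map (algebraMap ℝ ℂ))).toReal

/-!
Realise `Ã` as the action of `A ∈ GL₂(ℝ)` on `ℍ` (through conjugation when `det A < 0`), so that
`Ãⁿ` is the action of `Aⁿ`. For this action `cosh d(g • i, i) = ‖g‖_F² / (2 |det g|)`, hence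
`cosh dₙ = ‖Aⁿ‖_F² / 2` for `dₙ = d(Ãⁿ i, i)`. Since `eᵈ / 2 ≤ cosh d ≤ eᵈ`, `dₙ` is within
`log 2` of `2 log ‖Aⁿ‖_F`, and Gelfand's formula `‖Aⁿ‖^(1/n) → ρ(A)`, with `ρ(A) > 0` as `A` is
invertible, gives `dₙ / n → 2 log ρ(A)`.
-/

open Filter Topology

lemma ne_zero_of_eq_one_or_eq_neg_one {R : Type*} [NonAssocRing R] [Nontrivial R] {x : R}
    (h : x = 1 ∨ x = -1) : x ≠ 0 := by
  rcases h with rfl | rfl <;> simp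

namespace UpperHalfPlane

lemma cosh_dist_I (w : ℍ) : Real.cosh (dist w I) = (‖(w : ℂ)‖ ^ 2 + 1) / (2 * w.im) := by
  have hw : w.im ≠ 0 := w.im_pos.ne'
  rw [cosh_dist, coe_I, I_im, dist_eq_norm, ← Complex.normSq_eq_norm_sq,
    ← Complex.normSq_eq_norm_sq, Complex.normSq_apply, Complex.normSq_apply]
  simp only [Complex.sub_re, Complex.sub_im, Complex.I_re, Complex.I_im, coe_re, coe_im]
  field_simp
  ring

lemma cosh_dist_smul_I (g : GL (Fin 2) ℝ) :
    Real.cosh (dist (g • I) I)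
      = (g 0 0 ^ 2 + g 0 1 ^ 2 + g 1 0 ^ 2 + g 1 1 ^ 2) / (2 * |g.det.val|) := by
  have hnum : Complex.normSq (num g I) = g 0 0 ^ 2 + g 0 1 ^ 2 := by
    rw [num, coe_I, add_comm, normSq_add_mul_I, add_comm]
  have hdenom : Complex.normSq (denom g I) = g 1 0 ^ 2 + g 1 1 ^ 2 := by
    rw [denom, coe_I, add_comm, normSq_add_mul_I, add_comm]
  have hdenom_pos : 0 < g 1 0 ^ 2 + g 1 1 ^ 2 := hdenom ▸ normSq_denom_pos g (by simp)
  have hdet : 0 < |g.det.val| := abs_pos.2 g.det.ne_zero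
  rw [cosh_dist_I, coe_smul, norm_σ, norm_div, div_pow, ← Complex.normSq_eq_norm_sq,
    ← Complex.normSq_eq_norm_sq, im_smul_eq_div_normSq, hnum, hdenom, I_im]
  field_simp
  ring

end UpperHalfPlane

lemma moebius_eq_smul {A : Matrix (Fin 2) (Fin 2) ℝ} (hA : A.det = 1 ∨ A.det = -1) (z : ℍ) :
    moebius A z = GeneralLinearGroup.mkOfDetNeZero A (ne_zero_of_eq_one_or_eq_neg_one hA) • z := by
  ext1
  rw [moebius, dif_pos hA, coe_mk, coe_smul, σ]
  simp only [GeneralLinearGroup.val_det_apply]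
  rcases hA with h | h <;> norm_num [moebiusMap, h, num, denom, map_div₀]

lemma iterate_moebius_apply {A : Matrix (Fin 2) (Fin 2) ℝ} (hA : A.det = 1 ∨ A.det = -1)
    (n : ℕ) (z : ℍ) :
    (moebius A)^[n] z
      = GeneralLinearGroup.mkOfDetNeZero A (ne_zero_of_eq_one_or_eq_neg_one hA) ^ n • z := by
  rw [funext (moebius_eq_smul hA), smul_iterate_apply]

lemma abs_sub_two_mul_log_le_log_two {d x : ℝ} (hd : 0 ≤ d) (h : Real.cosh d = x ^ 2 / 2) :
    |d - 2 * Real.log x| ≤ Real.log 2 := by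
  have hx2 : 0 < x ^ 2 := by nlinarith [Real.one_le_cosh d]
  have hcosh_le : Real.cosh d ≤ Real.exp d := by
    rw [Real.cosh_eq]; linarith [Real.exp_le_exp.2 (neg_le_self hd)]
  have hexp_le : Real.exp d / 2 ≤ Real.cosh d := by
    rw [Real.cosh_eq]; linarith [Real.exp_pos (-d)]
  have hupper : d ≤ Real.log (x ^ 2) := (Real.le_log_iff_exp_le hx2).2 (by linarith)
  have hlower : Real.log (x ^ 2 / 2) ≤ d :=
    (Real.log_le_iff_le_exp (by positivity)).2 (by linarith)
  rw [Real.log_div hx2.ne' two_ne_zero, Real.log_pow] at hlower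
  rw [Real.log_pow] at hupper
  push_cast at hupper hlower
  rw [abs_le]
  constructor <;> linarith [Real.log_nonneg one_le_two]

lemma tendsto_div_of_cosh_eq_sq_div_two {d x : ℕ → ℝ} {L : ℝ} (hd : ∀ n, 0 ≤ d n)
    (h : ∀ n, Real.cosh (d n) = x n ^ 2 / 2)
    (hx : Tendsto (fun n : ℕ => Real.log (x n) / n) atTop (𝓝 L)) :
    Tendsto (fun n : ℕ => d n / n) atTop (𝓝 (2 * L)) := by
  have herr : Tendsto (fun n : ℕ => (d n - 2 * Real.log (x n)) / n) atTop (𝓝 0) := by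
    refine squeeze_zero_norm (fun n => ?_) (tendsto_const_div_atTop_nhds_zero_nat (Real.log 2))
    rw [norm_div, Real.norm_eq_abs, Real.norm_natCast]
    exact div_le_div_of_nonneg_right (abs_sub_two_mul_log_le_log_two (hd n) (h n)) n.cast_nonneg
  simpa only [add_zero] using ((hx.const_mul 2).add herr).congr fun n => by ring

section Gelfand

variable {A : Type*} [NormedRing A] [NormedAlgebra ℂ A] [CompleteSpace A] [Nontrivial A]

lemma spectralRadius_ne_zero_of_isUnit {a : A} (ha : IsUnit a) : spectralRadius ℂ a ≠ 0 := by
  obtain ⟨z, hz, hρ⟩ := spectrum.exists_nnnorm_eq_spectralRadius a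
  rw [← hρ, ENNReal.coe_ne_zero, nnnorm_ne_zero_iff]
  rintro rfl
  exact spectrum.zero_notMem ℂ ha hz

lemma spectralRadius_ne_top (a : A) : spectralRadius ℂ a ≠ ⊤ := by
  obtain ⟨z, -, hz⟩ := spectrum.exists_nnnorm_eq_spectralRadius a
  exact hz ▸ ENNReal.coe_ne_top

lemma tendsto_norm_pow_one_div (a : A) :
    Tendsto (fun n : ℕ => ‖a ^ n‖ ^ (1 / n : ℝ)) atTop (𝓝 (spectralRadius ℂ a).toReal) := by
  have := (ENNReal.tendsto_toReal (spectralRadius_ne_top a)).comp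
    (spectrum.pow_norm_pow_one_div_tendsto_nhds_spectralRadius a)
  simpa [Function.comp_def, ENNReal.toReal_ofReal, Real.rpow_nonneg] using this

lemma tendsto_log_norm_pow_div {a : A} (ha : IsUnit a) :
    Tendsto (fun n : ℕ => Real.log ‖a ^ n‖ / n) atTop
      (𝓝 (Real.log (spectralRadius ℂ a).toReal)) := by
  have hρ : 0 < (spectralRadius ℂ a).toReal :=
    ENNReal.toReal_pos (spectralRadius_ne_zero_of_isUnit ha) (spectralRadius_ne_top a)
  refine ((Real.continuousAt_log hρ.ne').tendsto.comp (tendsto_norm_pow_one_div a)).congr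
    fun n => ?_
  rw [Function.comp_apply, Real.log_rpow (norm_pos_iff.2 (ha.pow n).ne_zero), one_div_mul_eq_div]

end Gelfand

-- Gelfand's formula holds for any submultiplicative norm; the Frobenius norm is the one that
-- `UpperHalfPlane.cosh_dist_smul_I` produces.
attribute [local instance] Matrix.frobeniusNormedRing Matrix.frobeniusNormedAlgebra

lemma frobenius_norm_sq_fin_two (M : Matrix (Fin 2) (Fin 2) ℝ) :
    ‖M‖ ^ 2 = M 0 0 ^ 2 + M 0 1 ^ 2 + M 1 0 ^ 2 + M 1 1 ^ 2 := by
  rw [frobenius_norm_def, ← Real.rpow_natCast, ← Real.rpow_mul (by positivity)]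
  norm_num [Fin.sum_univ_two]
  ring

lemma frobenius_norm_map_ofReal {n : Type*} [Fintype n] [DecidableEq n] (M : Matrix n n ℝ) :
    ‖M.map (algebraMap ℝ ℂ)‖ = ‖M‖ :=
  frobenius_norm_map_eq M _ fun x => by simp

lemma cosh_dist_iterate_moebius_I {A : Matrix (Fin 2) (Fin 2) ℝ} (hA : A.det = 1 ∨ A.det = -1)
    (n : ℕ) :
    Real.cosh (dist ((moebius A)^[n] I) I) = ‖A.map (algebraMap ℝ ℂ) ^ n‖ ^ 2 / 2 := by
  have habs : |(A ^ n).det| = 1 := by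
    rw [det_pow, abs_pow]
    rcases hA with h | h <;> simp [h]
  have hval : ((GeneralLinearGroup.mkOfDetNeZero A (ne_zero_of_eq_one_or_eq_neg_one hA) ^ n :
      GL (Fin 2) ℝ) : Matrix (Fin 2) (Fin 2) ℝ) = A ^ n := by
    rw [Units.val_pow_eq_pow_val]; rfl
  have hmap : A.map (algebraMap ℝ ℂ) ^ n = (A ^ n).map (algebraMap ℝ ℂ) := by
    simp only [← RingHom.mapMatrix_apply, map_pow]
  rw [iterate_moebius_apply hA, UpperHalfPlane.cosh_dist_smul_I, GeneralLinearGroup.val_det_apply,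
    hval, habs, hmap, frobenius_norm_map_ofReal, frobenius_norm_sq_fin_two, mul_one]

open Filter Topology Function in
/-- For `A ∈ SL₂±(ℝ)`, the stable length of the associated
isometry of `ℍ²` equals `2 log ρ(A)`, where `ρ(A)` is the spectral radius. -/
theorem stmt13 (A : Matrix (Fin 2) (Fin 2) ℝ) (hA : A.det = 1 ∨ A.det = -1)
    (l : ℝ)
    (hl : Tendsto (fun n : ℕ => dist ((moebius A)^[n] UpperHalfPlane.I) UpperHalfPlane.I / n)
      atTop (nhds l)) :
    l = 2 * Real.log (specRad A) := by
  have hunit : IsUnit (A.map (algebraMap ℝ ℂ)) := by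
    rw [isUnit_iff_isUnit_det, ← RingHom.mapMatrix_apply, ← RingHom.map_det, isUnit_iff_ne_zero]
    simpa using ne_zero_of_eq_one_or_eq_neg_one hA
  exact tendsto_nhds_unique hl <| tendsto_div_of_cosh_eq_sq_div_two (fun _ => dist_nonneg)
    (cosh_dist_iterate_moebius_I hA) (tendsto_log_norm_pow_div hunit)
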